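/- arXiv:1906.02300 — 4 statements merged into one kernel-verified Lean document; each statement's English description precedes it below -/
import Mathlib

section
/- Suppose the bilinear series Q(x,y) = Σ_{m,n=1}^∞ a_{mn} x_m y_n has all rectangular partial sums bounded in modulus by H uniformly over x, y in the closed unit ball 𝒮 of ℓ^∞. Then for every x, y ∈ 𝒮 the series converges in Pringsheim's sense, the convergence is uniform over (x,y) ∈ 𝒮², and the limit function Q satisfies |Q(x,y)| ≤ H for all x, y ∈ 𝒮. -/
open Filter Topology

namespace Lw

/-- Rectangular block sum of the bilinear form. -/
noncomputable def B (a : ℕ → ℕ → ℂ) (A C : Finset ℕ) (x y : ℕ → ℂ) : ℂ :=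
  ∑ m ∈ A, ∑ n ∈ C, a m n * x m * y n

def Bdd (a : ℕ → ℕ → ℂ) (H : ℝ) : Prop :=
  ∀ (M N : ℕ) (x y : ℕ → ℂ), (∀ i, ‖x i‖ ≤ 1) → (∀ i, ‖y i‖ ≤ 1) →
    ‖∑ m ∈ Finset.range M, ∑ n ∈ Finset.range N, a m n * x m * y n‖ ≤ H

lemma B_transpose (a : ℕ → ℕ → ℂ) (A C : Finset ℕ) (x y : ℕ → ℂ) :
    B (fun m n => a n m) A C x y = B a C A y x := by
  unfold B
  rw [Finset.sum_comm]
  exact Finset.sum_congr rfl fun n _ => Finset.sum_congr rfl fun m _ => by ring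

lemma Bdd.transpose {a : ℕ → ℕ → ℂ} {H : ℝ} (h : Bdd a H) : Bdd (fun m n => a n m) H := by
  intro M N x y hx hy
  have := h N M y x hy hx
  rw [Finset.sum_comm] at this
  convert this using 3 with m hm
  exact Finset.sum_congr rfl fun n _ => by ring

lemma Bdd.nonneg {a : ℕ → ℕ → ℂ} {H : ℝ} (h : Bdd a H) : 0 ≤ H := by
  simpa using h 0 0 0 0 (by simp) (by simp)

/-- Every block sum is bounded by `H`. -/
lemma block_bound {a : ℕ → ℕ → ℂ} {H : ℝ} (h : Bdd a H) (A C : Finset ℕ)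
    {x y : ℕ → ℂ} (hx : ∀ i, ‖x i‖ ≤ 1) (hy : ∀ i, ‖y i‖ ≤ 1) :
    ‖B a A C x y‖ ≤ H := by
  set x' : ℕ → ℂ := fun m => if m ∈ A then x m else 0 with hx'def
  set y' : ℕ → ℂ := fun n => if n ∈ C then y n else 0 with hy'def
  have hx' : ∀ i, ‖x' i‖ ≤ 1 := by
    intro i; simp only [hx'def]; split <;> simpa using hx i
  have hy' : ∀ i, ‖y' i‖ ≤ 1 := by
    intro i; simp only [hy'def]; split <;> simpa using hy i
  have hb := h (A.sup id + 1) (C.sup id + 1) x' y' hx' hy'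
  have hsub : A ⊆ Finset.range (A.sup id + 1) := fun m hm =>
    Finset.mem_range.2 (Nat.lt_succ_of_le (Finset.le_sup (f := id) hm))
  have hsub' : C ⊆ Finset.range (C.sup id + 1) := fun n hn =>
    Finset.mem_range.2 (Nat.lt_succ_of_le (Finset.le_sup (f := id) hn))
  have key : ∑ m ∈ Finset.range (A.sup id + 1), ∑ n ∈ Finset.range (C.sup id + 1),
      a m n * x' m * y' n = B a A C x y := by
    rw [← Finset.sum_subset hsub (fun m _ hm => by
      apply Finset.sum_eq_zero; intro n _; simp [hx'def, hm])]
    apply Finset.sum_congr rfl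
    intro m hm
    rw [← Finset.sum_subset hsub' (fun n _ hn => by simp [hy'def, hn])]
    apply Finset.sum_congr rfl
    intro n hn
    simp [hx'def, hy'def, hm, hn]
  rwa [key] at hb

/-- Unimodular "phase" of a complex number (or 0). -/
noncomputable def ph (z : ℂ) : ℂ := if z = 0 then 0 else (‖z‖ : ℂ) / z

lemma ph_norm_le (z : ℂ) : ‖ph z‖ ≤ 1 := by
  unfold ph
  split
  · simp
  · rename_i h
    rw [norm_div]
    rw [Complex.norm_real, Real.norm_eq_abs, abs_of_nonneg (norm_nonneg z)]
    rw [div_self (by simpa using h)]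

lemma mul_ph (z : ℂ) : z * ph z = (‖z‖ : ℂ) := by
  unfold ph
  split
  · simp_all
  · field_simp

/-- Column absolute sums are bounded by `H`. -/
lemma col_abs_bound {a : ℕ → ℕ → ℂ} {H : ℝ} (h : Bdd a H) (n : ℕ) (A : Finset ℕ) :
    ∑ m ∈ A, ‖a m n‖ ≤ H := by
  have hb := block_bound h A {n} (x := fun m => ph (a m n)) (y := fun _ => 1)
    (fun i => ph_norm_le _) (fun i => by simp)
  have : B a A {n} (fun m => ph (a m n)) (fun _ => 1) = ((∑ m ∈ A, ‖a m n‖ : ℝ) : ℂ) := by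
    unfold B
    push_cast
    apply Finset.sum_congr rfl
    intro m _
    rw [Finset.sum_singleton, mul_one, mul_ph]
  rw [this] at hb
  rwa [Complex.norm_real, Real.norm_eq_abs,
    abs_of_nonneg (Finset.sum_nonneg fun m _ => norm_nonneg _)] at hb

lemma col_summable {a : ℕ → ℕ → ℂ} {H : ℝ} (h : Bdd a H) (n : ℕ) :
    Summable fun m => ‖a m n‖ :=
  summable_of_sum_range_le (fun m => norm_nonneg _) (fun M => col_abs_bound h n _)

/-- Tail of a summable nonneg series: sums over finsets far out are small. -/
lemma tail_small {f : ℕ → ℝ} (hf : Summable f) (h0 : ∀ m, 0 ≤ f m) {ε : ℝ} (hε : 0 < ε) :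
    ∃ M : ℕ, ∀ A : Finset ℕ, (∀ m ∈ A, M ≤ m) → ∑ m ∈ A, f m ≤ ε := by
  obtain ⟨s, hs⟩ := hf.vanishing (Metric.ball_mem_nhds 0 hε)
  refine ⟨s.sup id + 1, fun A hA => ?_⟩
  have hdisj : Disjoint A s := by
    rw [Finset.disjoint_left]
    intro m hm hms
    have h1 := hA m hm
    have h2 : m ≤ s.sup id := Finset.le_sup (f := id) hms
    omega
  have := hs A hdisj
  rw [Metric.mem_ball, dist_zero_right, Real.norm_eq_abs] at this
  calc ∑ m ∈ A, f m ≤ |∑ m ∈ A, f m| := le_abs_self _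
  _ ≤ ε := this.le

lemma B_le_abs (a : ℕ → ℕ → ℂ) (A C : Finset ℕ) {x y : ℕ → ℂ}
    (hx : ∀ i, ‖x i‖ ≤ 1) (hy : ∀ i, ‖y i‖ ≤ 1) :
    ‖B a A C x y‖ ≤ ∑ m ∈ A, ∑ n ∈ C, ‖a m n‖ := by
  refine (norm_sum_le _ _).trans (Finset.sum_le_sum fun m _ => ?_)
  refine (norm_sum_le _ _).trans (Finset.sum_le_sum fun n _ => ?_)
  calc ‖a m n * x m * y n‖ = ‖a m n‖ * ‖x m‖ * ‖y n‖ := by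
        rw [norm_mul, norm_mul]
  _ ≤ ‖a m n‖ * 1 * 1 := by
        gcongr
        exacts [hx m, hy n]
  _ = ‖a m n‖ := by ring

/-- Rows far out against finitely many fixed columns: small. -/
lemma crossRow {a : ℕ → ℕ → ℂ} (hsum : ∀ n, Summable fun m => ‖a m n‖)
    (N0 : ℕ) {η : ℝ} (hη : 0 < η) :
    ∃ M : ℕ, ∀ A C : Finset ℕ, ∀ x y : ℕ → ℂ, (∀ m ∈ A, M ≤ m) → (∀ n ∈ C, n < N0) →
      (∀ i, ‖x i‖ ≤ 1) → (∀ i, ‖y i‖ ≤ 1) → ‖B a A C x y‖ ≤ η := by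
  have hη' : 0 < η / (N0 + 1) := by positivity
  choose Mf hMf using fun n => tail_small (hsum n) (fun m => norm_nonneg _) hη'
  refine ⟨(Finset.range N0).sup Mf, fun A C x y hA hC hx hy => ?_⟩
  calc ‖B a A C x y‖ ≤ ∑ m ∈ A, ∑ n ∈ C, ‖a m n‖ := B_le_abs a A C hx hy
  _ = ∑ n ∈ C, ∑ m ∈ A, ‖a m n‖ := Finset.sum_comm
  _ ≤ ∑ _n ∈ C, η / (N0 + 1) := by
      refine Finset.sum_le_sum fun n hn => hMf n A fun m hm => ?_
      exact le_trans (Finset.le_sup (Finset.mem_range.2 (hC n hn))) (hA m hm)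
  _ = C.card * (η / (N0 + 1)) := by rw [Finset.sum_const, nsmul_eq_mul]
  _ ≤ N0 * (η / (N0 + 1)) := by
      gcongr
      have : C.card ≤ N0 := by
        simpa using Finset.card_le_card (fun n hn => Finset.mem_range.2 (hC n hn))
      exact_mod_cast this
  _ ≤ η := by
      rw [mul_div_assoc']
      rw [div_le_iff₀ (by positivity)]
      nlinarith [hη.le]
/-- The corner lemma: block sums over blocks entirely beyond `M` are uniformly small. -/
lemma corner {a : ℕ → ℕ → ℂ} {H : ℝ} (h : Bdd a H) {ε : ℝ} (hε : 0 < ε) :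
    ∃ M : ℕ, ∀ A C : Finset ℕ, ∀ x y : ℕ → ℂ, (∀ m ∈ A, M ≤ m) → (∀ n ∈ C, M ≤ n) →
      (∀ i, ‖x i‖ ≤ 1) → (∀ i, ‖y i‖ ≤ 1) → ‖B a A C x y‖ ≤ ε := by
  by_contra hcon
  push_neg at hcon
  -- rotate the witness so that the block sum is a real number `> ε`
  have hcon' : ∀ M : ℕ, ∃ (A C : Finset ℕ) (x y : ℕ → ℂ) (r : ℝ),
      (∀ m ∈ A, M ≤ m) ∧ (∀ n ∈ C, M ≤ n) ∧ (∀ i, ‖x i‖ ≤ 1) ∧ (∀ i, ‖y i‖ ≤ 1) ∧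
      ε < r ∧ B a A C x y = (r : ℂ) := by
    intro M
    obtain ⟨A, C, x, y, hA, hC, hx, hy, hgt⟩ := hcon M
    refine ⟨A, C, fun m => ph (B a A C x y) * x m, y, ‖B a A C x y‖, hA, hC, fun i => ?_,
      hy, hgt, ?_⟩
    · rw [norm_mul]
      calc ‖ph (B a A C x y)‖ * ‖x i‖ ≤ 1 * 1 := by
            gcongr
            exacts [ph_norm_le _, hx i]
      _ = 1 := one_mul 1
    · have key : B a A C (fun m => ph (B a A C x y) * x m) y
          = ph (B a A C x y) * B a A C x y := by
        conv_lhs => unfold B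
        conv_rhs => rw [show B a A C x y = ∑ m ∈ A, ∑ n ∈ C, a m n * x m * y n from rfl]
        rw [Finset.mul_sum]
        refine Finset.sum_congr rfl fun m _ => ?_
        rw [Finset.mul_sum]
        exact Finset.sum_congr rfl fun n _ => by ring
      rw [key, mul_comm, mul_ph]
  -- one step of the construction
  have step : ∀ (k P : ℕ), ∃ (M : ℕ) (A C : Finset ℕ) (x y : ℕ → ℂ) (r : ℝ),
      P ≤ M ∧
      (∀ A' C' : Finset ℕ, ∀ x' y' : ℕ → ℂ, (∀ m ∈ A', m < P) → (∀ n ∈ C', M ≤ n) →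
        (∀ i, ‖x' i‖ ≤ 1) → (∀ i, ‖y' i‖ ≤ 1) → ‖B a A' C' x' y'‖ ≤ (1/4 : ℝ)^k) ∧
      (∀ A' C' : Finset ℕ, ∀ x' y' : ℕ → ℂ, (∀ m ∈ A', M ≤ m) → (∀ n ∈ C', n < P) →
        (∀ i, ‖x' i‖ ≤ 1) → (∀ i, ‖y' i‖ ≤ 1) → ‖B a A' C' x' y'‖ ≤ (1/4 : ℝ)^k) ∧
      (∀ m ∈ A, M ≤ m) ∧ (∀ n ∈ C, M ≤ n) ∧ (∀ i, ‖x i‖ ≤ 1) ∧ (∀ i, ‖y i‖ ≤ 1) ∧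
      ε < r ∧ B a A C x y = (r : ℂ) := by
    intro k P
    have hη : (0:ℝ) < (1/4 : ℝ)^k := by positivity
    obtain ⟨M1, hM1⟩ := crossRow (fun n => col_summable h n) P hη
    obtain ⟨M2, hM2⟩ := crossRow (a := fun m n => a n m)
      (fun n => col_summable h.transpose n) P hη
    obtain ⟨A, C, x, y, r, hA, hC, hx, hy, hr, hB⟩ := hcon' (max (max M1 M2) P)
    refine ⟨max (max M1 M2) P, A, C, x, y, r, le_max_right _ _, ?_, ?_,
      hA, hC, hx, hy, hr, hB⟩
    · intro A' C' x' y' hA' hC' hx' hy'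
      have := hM2 C' A' y' x'
        (fun n hn => le_trans (le_trans (le_max_right M1 M2) (le_max_left _ P)) (hC' n hn))
        hA' hy' hx'
      rwa [B_transpose] at this
    · intro A' C' x' y' hA' hC' hx' hy'
      exact hM1 A' C' x' y'
        (fun m hm => le_trans (le_trans (le_max_left M1 M2) (le_max_left _ P)) (hA' m hm))
        hC' hx' hy'
  choose Mf Af Cf xf yf rf hPM hcross1 hcross2 hAge hCge hxb hyb hrgt hBeq using step
  -- the floor sequence
  set Pseq : ℕ → ℕ := fun k => Nat.rec 0
    (fun k Pk => max (((Af k Pk ∪ Cf k Pk).sup id) + 1) (Pk + 1)) k with hPseq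
  have hPsucc : ∀ k, Pseq (k+1) =
      max (((Af k (Pseq k) ∪ Cf k (Pseq k)).sup id) + 1) (Pseq k + 1) := fun k => rfl
  set Ak : ℕ → Finset ℕ := fun k => Af k (Pseq k) with hAk
  set Ck : ℕ → Finset ℕ := fun k => Cf k (Pseq k) with hCk
  set xk : ℕ → ℕ → ℂ := fun k => xf k (Pseq k) with hxk
  set yk : ℕ → ℕ → ℂ := fun k => yf k (Pseq k) with hyk
  set rk : ℕ → ℝ := fun k => rf k (Pseq k) with hrk
  have hPmono : StrictMono Pseq := by
    apply strictMono_nat_of_lt_succ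
    intro k
    rw [hPsucc]
    exact lt_of_lt_of_le (Nat.lt_succ_self _) (le_max_right _ _)
  have hAlt : ∀ k, ∀ m ∈ Ak k, m < Pseq (k+1) := by
    intro k m hm
    rw [hPsucc]
    have : m ≤ (Af k (Pseq k) ∪ Cf k (Pseq k)).sup id :=
      Finset.le_sup (f := id) (Finset.mem_union_left _ hm)
    omega
  have hClt : ∀ k, ∀ n ∈ Ck k, n < Pseq (k+1) := by
    intro k n hn
    rw [hPsucc]
    have : n ≤ (Af k (Pseq k) ∪ Cf k (Pseq k)).sup id :=
      Finset.le_sup (f := id) (Finset.mem_union_right _ hn)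
    omega
  have hAge' : ∀ k, ∀ m ∈ Ak k, Pseq k ≤ m :=
    fun k m hm => le_trans (hPM k (Pseq k)) (hAge k (Pseq k) m hm)
  have hCge' : ∀ k, ∀ n ∈ Ck k, Pseq k ≤ n :=
    fun k n hn => le_trans (hPM k (Pseq k)) (hCge k (Pseq k) n hn)
  -- disjointness
  have hdisj : ∀ (F : ℕ → Finset ℕ), (∀ k, ∀ m ∈ F k, m < Pseq (k+1)) →
      (∀ k, ∀ m ∈ F k, Pseq k ≤ m) → ∀ {i j : ℕ}, i ≠ j → Disjoint (F i) (F j) := by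
    intro F hlt hge i j hij
    wlog hij' : i < j generalizing i j
    · exact (this hij.symm (by omega)).symm
    rw [Finset.disjoint_left]
    intro m hmi hmj
    have h1 : m < Pseq (i+1) := hlt i m hmi
    have h2 : Pseq j ≤ m := hge j m hmj
    have h3 : Pseq (i+1) ≤ Pseq j := hPmono.monotone (Nat.succ_le_of_lt hij')
    omega
  set K := Nat.ceil ((H + 4)/ε) + 1 with hK
  -- combined vectors
  set X : ℕ → ℂ := fun m => ∑ k ∈ Finset.range K, if m ∈ Ak k then xk k m else 0 with hX
  set Y : ℕ → ℂ := fun n => ∑ k ∈ Finset.range K, if n ∈ Ck k then yk k n else 0 with hY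
  have hXeq : ∀ k ∈ Finset.range K, ∀ m ∈ Ak k, X m = xk k m := by
    intro k hk m hm
    show (∑ b ∈ Finset.range K, if m ∈ Ak b then xk b m else 0) = xk k m
    rw [Finset.sum_eq_single_of_mem k hk (fun b _ hbk => by
      rw [if_neg]
      exact fun hmb => (Finset.disjoint_left.1 (hdisj Ak hAlt hAge' hbk) hmb) hm)]
    rw [if_pos hm]
  have hYeq : ∀ k ∈ Finset.range K, ∀ n ∈ Ck k, Y n = yk k n := by
    intro k hk n hn
    show (∑ b ∈ Finset.range K, if n ∈ Ck b then yk b n else 0) = yk k n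
    rw [Finset.sum_eq_single_of_mem k hk (fun b _ hbk => by
      rw [if_neg]
      exact fun hnb => (Finset.disjoint_left.1 (hdisj Ck hClt hCge' hbk) hnb) hn)]
    rw [if_pos hn]
  have hXb : ∀ i, ‖X i‖ ≤ 1 := by
    intro i
    by_cases hex : ∃ k ∈ Finset.range K, i ∈ Ak k
    · obtain ⟨k, hk, hik⟩ := hex
      rw [hXeq k hk i hik]
      exact hxb k (Pseq k) i
    · push_neg at hex
      show ‖∑ b ∈ Finset.range K, if i ∈ Ak b then xk b i else 0‖ ≤ 1
      rw [Finset.sum_eq_zero (fun b hb => if_neg (hex b hb))]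
      simp
  have hYb : ∀ i, ‖Y i‖ ≤ 1 := by
    intro i
    by_cases hex : ∃ k ∈ Finset.range K, i ∈ Ck k
    · obtain ⟨k, hk, hik⟩ := hex
      rw [hYeq k hk i hik]
      exact hyb k (Pseq k) i
    · push_neg at hex
      show ‖∑ b ∈ Finset.range K, if i ∈ Ck b then yk b i else 0‖ ≤ 1
      rw [Finset.sum_eq_zero (fun b hb => if_neg (hex b hb))]
      simp
  -- expansion of the big block sum
  set T : ℕ → ℕ → ℂ := fun k j => B a (Ak k) (Ck j) (xk k) (yk j) with hT
  have hexpand : B a ((Finset.range K).biUnion Ak) ((Finset.range K).biUnion Ck) X Y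
      = ∑ k ∈ Finset.range K, ∑ j ∈ Finset.range K, T k j := by
    conv_lhs => unfold B
    rw [Finset.sum_biUnion (fun i _ j _ hij => hdisj Ak hAlt hAge' hij)]
    refine Finset.sum_congr rfl fun k hk => ?_
    have inner : ∀ m ∈ Ak k, ∑ n ∈ (Finset.range K).biUnion Ck, a m n * X m * Y n
        = ∑ j ∈ Finset.range K, ∑ n ∈ Ck j, a m n * (xk k m) * (yk j n) := by
      intro m hm
      rw [Finset.sum_biUnion (fun i _ j _ hij => hdisj Ck hClt hCge' hij)]
      refine Finset.sum_congr rfl fun j hj => Finset.sum_congr rfl fun n hn => ?_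
      rw [hXeq k hk m hm, hYeq j hj n hn]
    rw [Finset.sum_congr rfl inner, Finset.sum_comm]
    rfl
  have hdiag : ∀ k, T k k = ((rk k : ℝ) : ℂ) := fun k => hBeq k (Pseq k)
  have hTbound : ∀ k j : ℕ, k ≠ j → ‖T k j‖ ≤ (1/2:ℝ)^k * (1/2:ℝ)^j := by
    intro k j hkj
    have key : ‖T k j‖ ≤ (1/4:ℝ)^(max k j) := by
      rcases lt_or_gt_of_ne hkj with hlt | hgt
      · have := hcross1 j (Pseq j) (Ak k) (Ck j) (xk k) (yk j)
          (fun m hm => lt_of_lt_of_le (hAlt k m hm) (hPmono.monotone hlt))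
          (hCge j (Pseq j)) (hxb k (Pseq k)) (hyb j (Pseq j))
        rwa [max_eq_right hlt.le]
      · have := hcross2 k (Pseq k) (Ak k) (Ck j) (xk k) (yk j)
          (hAge k (Pseq k))
          (fun n hn => lt_of_lt_of_le (hClt j n hn) (hPmono.monotone hgt))
          (hxb k (Pseq k)) (hyb j (Pseq j))
        rwa [max_eq_left hgt.le]
    calc ‖T k j‖ ≤ (1/4:ℝ)^(max k j) := key
    _ = (1/2:ℝ)^(max k j) * (1/2:ℝ)^(max k j) := by
        rw [← mul_pow]; norm_num
    _ ≤ (1/2:ℝ)^k * (1/2:ℝ)^j := by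
        exact mul_le_mul (pow_le_pow_of_le_one (by norm_num) (by norm_num) (le_max_left k j))
          (pow_le_pow_of_le_one (by norm_num) (by norm_num) (le_max_right k j))
          (by positivity) (by positivity)
  have hsplit : ∑ k ∈ Finset.range K, ∑ j ∈ Finset.range K, T k j
      = ((∑ k ∈ Finset.range K, rk k : ℝ) : ℂ)
        + ∑ k ∈ Finset.range K, ∑ j ∈ (Finset.range K).erase k, T k j := by
    push_cast
    rw [← Finset.sum_add_distrib]
    refine Finset.sum_congr rfl fun k hk => ?_
    rw [← Finset.add_sum_erase _ _ hk, hdiag k]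
  have hE : ‖∑ k ∈ Finset.range K, ∑ j ∈ (Finset.range K).erase k, T k j‖ ≤ 4 := by
    calc ‖∑ k ∈ Finset.range K, ∑ j ∈ (Finset.range K).erase k, T k j‖
        ≤ ∑ k ∈ Finset.range K, ∑ j ∈ (Finset.range K).erase k, ‖T k j‖ := by
          refine (norm_sum_le _ _).trans (Finset.sum_le_sum fun k _ => norm_sum_le _ _)
    _ ≤ ∑ k ∈ Finset.range K, ∑ j ∈ (Finset.range K).erase k, (1/2:ℝ)^k * (1/2:ℝ)^j := by
          refine Finset.sum_le_sum fun k _ => Finset.sum_le_sum fun j hj => ?_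
          exact hTbound k j (Ne.symm (Finset.ne_of_mem_erase hj))
    _ ≤ ∑ k ∈ Finset.range K, ∑ j ∈ Finset.range K, (1/2:ℝ)^k * (1/2:ℝ)^j := by
          refine Finset.sum_le_sum fun k _ => ?_
          refine Finset.sum_le_sum_of_subset_of_nonneg (Finset.erase_subset _ _)
            fun j _ _ => by positivity
    _ = (∑ k ∈ Finset.range K, (1/2:ℝ)^k) * (∑ j ∈ Finset.range K, (1/2:ℝ)^j) := by
          rw [Finset.sum_mul_sum]
    _ ≤ 2 * 2 := by
          have := sum_geometric_two_le K
          have h0 : (0:ℝ) ≤ ∑ k ∈ Finset.range K, (1/2:ℝ)^k :=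
            Finset.sum_nonneg fun k _ => by positivity
          exact mul_le_mul this this h0 (by norm_num)
    _ = 4 := by norm_num
  have hnorm : ‖B a ((Finset.range K).biUnion Ak) ((Finset.range K).biUnion Ck) X Y‖ ≤ H :=
    block_bound h _ _ hXb hYb
  have hsum_le : ∑ k ∈ Finset.range K, rk k ≤ H + 4 := by
    have h2 : ((∑ k ∈ Finset.range K, rk k : ℝ) : ℂ)
        = B a ((Finset.range K).biUnion Ak) ((Finset.range K).biUnion Ck) X Y
          - ∑ k ∈ Finset.range K, ∑ j ∈ (Finset.range K).erase k, T k j := by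
      rw [hexpand, hsplit]; ring
    have h3 : ∑ k ∈ Finset.range K, rk k
        = ‖((∑ k ∈ Finset.range K, rk k : ℝ) : ℂ)‖ := by
      rw [Complex.norm_real, Real.norm_eq_abs, abs_of_nonneg]
      exact Finset.sum_nonneg fun k _ => le_of_lt (lt_trans hε (hrgt k (Pseq k)))
    rw [h3, h2]
    calc ‖_ - _‖ ≤ ‖_‖ + ‖_‖ := norm_sub_le _ _
    _ ≤ H + 4 := add_le_add hnorm hE
  have hsum_ge : (K:ℝ) * ε ≤ ∑ k ∈ Finset.range K, rk k := by
    calc (K:ℝ) * ε = ∑ _k ∈ Finset.range K, ε := by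
          rw [Finset.sum_const, nsmul_eq_mul, Finset.card_range]
    _ ≤ ∑ k ∈ Finset.range K, rk k :=
          Finset.sum_le_sum fun k _ => (hrgt k (Pseq k)).le
  have hKε : H + 4 < (K:ℝ) * ε := by
    have h1 : (H+4)/ε < (K:ℝ) := by
      rw [hK]
      push_cast
      exact lt_of_le_of_lt (Nat.le_ceil _) (by linarith)
    calc H + 4 = ((H+4)/ε) * ε := by field_simp
    _ < (K:ℝ) * ε := mul_lt_mul_of_pos_right h1 hε
  linarith

/-- Blocks whose rows all lie beyond `M` are uniformly small. -/
lemma rowsTail {a : ℕ → ℕ → ℂ} {H : ℝ} (h : Bdd a H) {ε : ℝ} (hε : 0 < ε) :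
    ∃ M : ℕ, ∀ A C : Finset ℕ, ∀ x y : ℕ → ℂ, (∀ m ∈ A, M ≤ m) →
      (∀ i, ‖x i‖ ≤ 1) → (∀ i, ‖y i‖ ≤ 1) → ‖B a A C x y‖ ≤ ε := by
  have hε2 : (0:ℝ) < ε/2 := by positivity
  obtain ⟨N0, hN0⟩ := corner h hε2
  obtain ⟨M1, hM1⟩ := crossRow (fun n => col_summable h n) N0 hε2
  refine ⟨max N0 M1, fun A C x y hA hx hy => ?_⟩
  have hsplitB : B a A C x y
      = B a A (C.filter (fun n => n < N0)) x y
        + B a A (C.filter (fun n => ¬ n < N0)) x y := by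
    unfold B
    rw [← Finset.sum_add_distrib]
    exact Finset.sum_congr rfl fun m _ =>
      (Finset.sum_filter_add_sum_filter_not C _ _).symm
  rw [hsplitB]
  calc ‖_ + _‖ ≤ ‖_‖ + ‖_‖ := norm_add_le _ _
  _ ≤ ε/2 + ε/2 := by
      refine add_le_add ?_ ?_
      · exact hM1 A _ x y (fun m hm => le_trans (le_max_right N0 M1) (hA m hm))
          (fun n hn => (Finset.mem_filter.1 hn).2) hx hy
      · exact hN0 A _ x y (fun m hm => le_trans (le_max_left N0 M1) (hA m hm))
          (fun n hn => by have := (Finset.mem_filter.1 hn).2; omega) hx hy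
  _ = ε := by ring

lemma colsTail {a : ℕ → ℕ → ℂ} {H : ℝ} (h : Bdd a H) {ε : ℝ} (hε : 0 < ε) :
    ∃ M : ℕ, ∀ A C : Finset ℕ, ∀ x y : ℕ → ℂ, (∀ n ∈ C, M ≤ n) →
      (∀ i, ‖x i‖ ≤ 1) → (∀ i, ‖y i‖ ≤ 1) → ‖B a A C x y‖ ≤ ε := by
  obtain ⟨M, hM⟩ := rowsTail h.transpose hε
  refine ⟨M, fun A C x y hC hx hy => ?_⟩
  have := hM C A y x hC hy hx
  rwa [B_transpose] at this

lemma split_rows (a : ℕ → ℕ → ℂ) {K M : ℕ} (hKM : K ≤ M) (C : Finset ℕ) (x y : ℕ → ℂ) :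
    B a (Finset.range M) C x y
      = B a (Finset.range K) C x y + B a (Finset.Ico K M) C x y := by
  unfold B
  simp only [Finset.range_eq_Ico]
  exact (Finset.sum_Ico_consecutive _ (Nat.zero_le K) hKM).symm

lemma split_cols (a : ℕ → ℕ → ℂ) {K N : ℕ} (hKN : K ≤ N) (A : Finset ℕ) (x y : ℕ → ℂ) :
    B a A (Finset.range N) x y
      = B a A (Finset.range K) x y + B a A (Finset.Ico K N) x y := by
  unfold B
  rw [← Finset.sum_add_distrib]
  refine Finset.sum_congr rfl fun m _ => ?_
  simp only [Finset.range_eq_Ico]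
  exact (Finset.sum_Ico_consecutive _ (Nat.zero_le K) hKN).symm

/-- distance of a partial sum to the `K`-th square partial sum. -/
lemma dist_to_square {a : ℕ → ℕ → ℂ} {H : ℝ} (h : Bdd a H) {ε : ℝ} (hε : 0 < ε) :
    ∃ K : ℕ, ∀ M N : ℕ, K ≤ M → K ≤ N → ∀ x y : ℕ → ℂ,
      (∀ i, ‖x i‖ ≤ 1) → (∀ i, ‖y i‖ ≤ 1) →
      ‖B a (Finset.range M) (Finset.range N) x y
        - B a (Finset.range K) (Finset.range K) x y‖ ≤ ε := by
  have hε2 : (0:ℝ) < ε/2 := by positivity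
  obtain ⟨Mr, hMr⟩ := rowsTail h hε2
  obtain ⟨Mc, hMc⟩ := colsTail h hε2
  refine ⟨max Mr Mc, fun M N hM hN x y hx hy => ?_⟩
  set K := max Mr Mc
  have e1 : B a (Finset.range M) (Finset.range N) x y
      = B a (Finset.range K) (Finset.range K) x y
        + B a (Finset.range K) (Finset.Ico K N) x y
        + B a (Finset.Ico K M) (Finset.range N) x y := by
    rw [split_rows a hM, split_cols a hN]
  rw [e1]
  have : B a (Finset.range K) (Finset.range K) x y
        + B a (Finset.range K) (Finset.Ico K N) x y
        + B a (Finset.Ico K M) (Finset.range N) x y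
        - B a (Finset.range K) (Finset.range K) x y
      = B a (Finset.range K) (Finset.Ico K N) x y
        + B a (Finset.Ico K M) (Finset.range N) x y := by ring
  rw [this]
  calc ‖_ + _‖ ≤ ‖_‖ + ‖_‖ := norm_add_le _ _
  _ ≤ ε/2 + ε/2 := by
      refine add_le_add ?_ ?_
      · exact hMc _ _ x y (fun n hn => le_trans (le_max_right Mr Mc) (Finset.mem_Ico.1 hn).1)
          hx hy
      · exact hMr _ _ x y (fun m hm => le_trans (le_max_left Mr Mc) (Finset.mem_Ico.1 hm).1)
          hx hy
  _ = ε := by ring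


end Lw

/-- Littlewood's theorem: If all rectangular partial sums of the bilinear
series `∑ a_{mn} x_m y_n` are bounded in modulus by `H` uniformly over `x, y` in the closed
unit ball `𝒮` of `ℓ^∞`, then the series converges in Pringsheim's sense for all `x, y ∈ 𝒮`,
uniformly over `𝒮²`, to a limit function `Q` with `|Q(x,y)| ≤ H` on `𝒮²`. -/
theorem statement6 (a : ℕ → ℕ → ℂ) (H : ℝ)
    (hbd : ∀ (M N : ℕ) (x y : ℕ → ℂ), (∀ i, ‖x i‖ ≤ 1) → (∀ i, ‖y i‖ ≤ 1) →
      ‖∑ m ∈ Finset.range M, ∑ n ∈ Finset.range N, a m n * x m * y n‖ ≤ H) :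
    ∃ Q : (ℕ → ℂ) → (ℕ → ℂ) → ℂ,
      TendstoUniformlyOn
        (fun (MN : ℕ × ℕ) (p : (ℕ → ℂ) × (ℕ → ℂ)) =>
          ∑ m ∈ Finset.range MN.1, ∑ n ∈ Finset.range MN.2, a m n * p.1 m * p.2 n)
        (fun p => Q p.1 p.2) atTop
        {p : (ℕ → ℂ) × (ℕ → ℂ) | (∀ i, ‖p.1 i‖ ≤ 1) ∧ (∀ i, ‖p.2 i‖ ≤ 1)} ∧
      ∀ x y : ℕ → ℂ, (∀ i, ‖x i‖ ≤ 1) → (∀ i, ‖y i‖ ≤ 1) →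
        Tendsto (fun MN : ℕ × ℕ =>
            ∑ m ∈ Finset.range MN.1, ∑ n ∈ Finset.range MN.2, a m n * x m * y n) atTop
          (𝓝 (Q x y)) ∧ ‖Q x y‖ ≤ H := by
  have hB : Lw.Bdd a H := hbd
  set S : ℕ × ℕ → ((ℕ → ℂ) × (ℕ → ℂ)) → ℂ := fun MN p =>
    ∑ m ∈ Finset.range MN.1, ∑ n ∈ Finset.range MN.2, a m n * p.1 m * p.2 n with hS
  set s : Set ((ℕ → ℂ) × (ℕ → ℂ)) :=
    {p | (∀ i, ‖p.1 i‖ ≤ 1) ∧ (∀ i, ‖p.2 i‖ ≤ 1)} with hs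
  have hSB : ∀ (MN : ℕ × ℕ) (p : (ℕ → ℂ) × (ℕ → ℂ)),
      S MN p = Lw.B a (Finset.range MN.1) (Finset.range MN.2) p.1 p.2 := fun _ _ => rfl
  have hUC : UniformCauchySeqOn S atTop s := by
    rw [Metric.uniformCauchySeqOn_iff]
    intro ε hε
    obtain ⟨K, hK⟩ := Lw.dist_to_square hB (show (0:ℝ) < ε/3 by positivity)
    refine ⟨(K, K), fun m hm n hn p hp => ?_⟩
    have h1 := hK m.1 m.2 hm.1 hm.2 p.1 p.2 hp.1 hp.2
    have h2 := hK n.1 n.2 hn.1 hn.2 p.1 p.2 hp.1 hp.2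
    rw [dist_eq_norm]
    have e : S m p - S n p
        = (Lw.B a (Finset.range m.1) (Finset.range m.2) p.1 p.2
            - Lw.B a (Finset.range K) (Finset.range K) p.1 p.2)
          - (Lw.B a (Finset.range n.1) (Finset.range n.2) p.1 p.2
            - Lw.B a (Finset.range K) (Finset.range K) p.1 p.2) := by
      rw [hSB, hSB]; ring
    rw [e]
    calc ‖_ - _‖ ≤ ‖_‖ + ‖_‖ := norm_sub_le _ _
    _ ≤ ε/3 + ε/3 := add_le_add h1 h2
    _ < ε := by linarith
  have hcauchy : ∀ p ∈ s, CauchySeq (fun MN => S MN p) := fun p hp =>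
    hUC.cauchySeq hp
  set Q : (ℕ → ℂ) → (ℕ → ℂ) → ℂ := fun x y =>
    limUnder atTop (fun MN : ℕ × ℕ =>
      ∑ m ∈ Finset.range MN.1, ∑ n ∈ Finset.range MN.2, a m n * x m * y n) with hQ
  have htend : ∀ p ∈ s, Tendsto (fun MN => S MN p) atTop (𝓝 (Q p.1 p.2)) := by
    intro p hp
    exact (hcauchy p hp).tendsto_limUnder
  refine ⟨Q, hUC.tendstoUniformlyOn_of_tendsto htend, fun x y hx hy => ?_⟩
  have hmem : (x, y) ∈ s := ⟨hx, hy⟩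
  refine ⟨htend (x, y) hmem, ?_⟩
  exact le_of_tendsto (htend (x, y) hmem).norm
    (Filter.Eventually.of_forall fun MN => hbd MN.1 MN.2 x y hx hy)
end

section
/- Let A = (a_{mn}) be an N × N unitary matrix (so Σ_{n=1}^N a_{rn} conj(a_{sn}) = δ_{rs}) and define Q(x) = N^{-1} Σ_{m,n=1}^N a_{mn} x_m x_n. Then |Q(x)| ≤ 1 for all x in the closed unit polydisc D^N. -/
open Filter Topology

/-- Littlewood's lemma: If `A` is an `N × N` unitary matrix
(`∑_n a_{rn} conj(a_{sn}) = δ_{rs}`) and `Q(x) = N⁻¹ ∑_{m,n} a_{mn} x_m x_n`, then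
`|Q(x)| ≤ 1` for all `x` in the closed unit polydisc `D^N`. -/
theorem statement11 (N : ℕ) (A : Matrix (Fin N) (Fin N) ℂ)
    (hA : ∀ r s, ∑ n, A r n * (starRingEnd ℂ) (A s n) = if r = s then 1 else 0)
    (x : Fin N → ℂ) (hx : ∀ j, ‖x j‖ ≤ 1) :
    ‖(N : ℂ)⁻¹ * ∑ m, ∑ n, A m n * x m * x n‖ ≤ 1 := by
  rcases Nat.eq_zero_or_pos N with hN | hN
  · subst hN; simp
  set y : Fin N → ℂ := fun m => ∑ n, A m n * x n with hy
  have hunit : A * A.conjTranspose = 1 := by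
    ext r s
    simpa [Matrix.mul_apply, Matrix.conjTranspose_apply, Matrix.one_apply] using hA r s
  have hunit' : A.conjTranspose * A = 1 := mul_eq_one_comm.mp hunit
  have hcol : ∀ n p : Fin N, ∑ m, (starRingEnd ℂ) (A m n) * A m p
      = if n = p then 1 else 0 := by
    intro n p
    have := congrFun (congrFun hunit' n) p
    simpa [Matrix.mul_apply, Matrix.conjTranspose_apply, Matrix.one_apply] using this
  have hcol' : ∀ n p : Fin N, ∑ m, A m n * (starRingEnd ℂ) (A m p)
      = if n = p then 1 else 0 := by
    intro n p
    have := congrArg (starRingEnd ℂ) (hcol n p)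
    simpa [map_sum, mul_comm, apply_ite] using this
  -- norm preservation: ∑ normSq (y m) = ∑ normSq (x n)
  have key : (∑ m, y m * (starRingEnd ℂ) (y m)) = ∑ n, x n * (starRingEnd ℂ) (x n) := by
    calc (∑ m, y m * (starRingEnd ℂ) (y m))
        = ∑ m, ∑ n, ∑ p, (A m n * (starRingEnd ℂ) (A m p)) * (x n * (starRingEnd ℂ) (x p)) := by
          refine Finset.sum_congr rfl fun m _ => ?_
          simp only [hy, map_sum, map_mul, Finset.sum_mul_sum]
          refine Finset.sum_congr rfl fun n _ => Finset.sum_congr rfl fun p _ => ?_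
          ring
      _ = ∑ n, ∑ p, (∑ m, A m n * (starRingEnd ℂ) (A m p)) * (x n * (starRingEnd ℂ) (x p)) := by
          rw [Finset.sum_comm]
          refine Finset.sum_congr rfl fun n _ => ?_
          rw [Finset.sum_comm]
          simp [Finset.sum_mul]
      _ = ∑ n, x n * (starRingEnd ℂ) (x n) := by
          simp [hcol', ite_mul, Finset.sum_ite_eq]
  have hnorm : (∑ m, Complex.normSq (y m)) = ∑ n, Complex.normSq (x n) := by
    have := congrArg Complex.re key
    simpa [Complex.mul_conj] using this
  -- rewrite the double sum
  have hS : (∑ m, ∑ n, A m n * x m * x n) = ∑ m, x m * y m := by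
    refine Finset.sum_congr rfl fun m _ => ?_
    simp only [hy, Finset.mul_sum]
    exact Finset.sum_congr rfl fun n _ => by ring
  have hxsq : (∑ n, Complex.normSq (x n)) ≤ (N : ℝ) := by
    calc (∑ n, Complex.normSq (x n)) ≤ ∑ _n : Fin N, (1 : ℝ) := by
          refine Finset.sum_le_sum fun n _ => ?_
          have := hx n
          have h2 : Complex.normSq (x n) = ‖x n‖ ^ 2 := (Complex.sq_norm (x n)).symm
          rw [h2]
          nlinarith [norm_nonneg (x n)]
      _ = (N : ℝ) := by simp
  have hbound : ‖∑ m, x m * y m‖ ≤ (N : ℝ) := by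
    calc ‖∑ m, x m * y m‖ ≤ ∑ m, ‖x m‖ * ‖y m‖ := by
          refine (norm_sum_le _ _).trans ?_
          refine Finset.sum_le_sum fun m _ => ?_
          simp [norm_mul]
      _ ≤ Real.sqrt (∑ m, ‖x m‖ ^ 2) * Real.sqrt (∑ m, ‖y m‖ ^ 2) :=
          Real.sum_mul_le_sqrt_mul_sqrt _ _ _
      _ = Real.sqrt (∑ m, Complex.normSq (x m)) * Real.sqrt (∑ m, Complex.normSq (y m)) := by
          simp [Complex.sq_norm]
      _ = ∑ m, Complex.normSq (x m) := by
          rw [hnorm, Real.mul_self_sqrt (Finset.sum_nonneg fun n _ => Complex.normSq_nonneg _)]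
      _ ≤ (N : ℝ) := hxsq
  rw [hS, norm_mul]
  have hNpos : (0 : ℝ) < (N : ℝ) := by exact_mod_cast hN
  have : ‖(N : ℂ)⁻¹‖ = (N : ℝ)⁻¹ := by
    simp
  rw [this]
  rw [inv_mul_le_iff₀ hNpos, mul_one]
  exact hbound
end

section
/- Define recursively C₁ to be the 4×4 matrix with −1 on the diagonal and 1 off the diagonal, and C_{α+1} the 4^{α+1} × 4^{α+1} block matrix with blocks −C_α on the diagonal and C_α off the diagonal. Then C_α² = 4^α · I for every α ≥ 1; in particular 2^{-α} C_α is a real symmetric orthogonal matrix. -/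
open Filter Topology Matrix

/-- Toeplitz's matrices: `toepT 1` is the `4 × 4` matrix with `-1` on the diagonal and `1`
off it, and `toepT (α+1)` is the `4 × 4` block matrix with blocks `-toepT α` on the
diagonal and `toepT α` off it (a Kronecker product with `toepT 1`); the index set of
`toepT α` is `Fin α → Fin 4`, of cardinality `4^α`. -/
def toepT : (α : ℕ) → Matrix (Fin α → Fin 4) (Fin α → Fin 4) ℝ
  | 0 => 1
  | (α + 1) => fun i j =>
      (if i 0 = j 0 then (-1 : ℝ) else 1) *
        toepT α (fun k => i k.succ) (fun k => j k.succ)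

/-! `C_{α+1}` is the Kronecker product `C₁ ⊗ C_α`, reindexed along `Fin (α+1) → Fin 4 ≃
Fin 4 × (Fin α → Fin 4)`. Kronecker products are compatible with multiplication and
transposition, so `C_α² = 4^α • 1` and the symmetry follow by induction from `C₁² = 4 • 1`. -/

open scoped Kronecker

def toepOne : Matrix (Fin 4) (Fin 4) ℝ := of fun i j => if i = j then -1 else 1

lemma toepOne_transpose : toepOneᵀ = toepOne := by
  ext i j
  simp only [toepOne, transpose_apply, of_apply, eq_comm]

lemma toepOne_mul_self : toepOne * toepOne = (4 : ℝ) • 1 := by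
  ext i j
  fin_cases i <;> fin_cases j <;> simp [toepOne, mul_apply, Fin.sum_univ_four] <;> norm_num

lemma toepT_succ (n : ℕ) :
    toepT (n + 1) = (toepOne ⊗ₖ toepT n).submatrix (Fin.consEquiv fun _ => Fin 4).symm
      (Fin.consEquiv fun _ => Fin 4).symm :=
  rfl

lemma kronecker_mul_self_of_mul_self {R l m : Type*} [CommSemiring R] [Fintype l] [Fintype m]
    [DecidableEq l] [DecidableEq m] {A : Matrix l l R} {B : Matrix m m R} {a b : R}
    (hA : A * A = a • 1) (hB : B * B = b • 1) : (A ⊗ₖ B) * (A ⊗ₖ B) = (a * b) • 1 := by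
  rw [← mul_kronecker_mul, hA, hB, smul_kronecker, kronecker_smul, one_kronecker_one, smul_smul]

lemma toepT_transpose (α : ℕ) : (toepT α)ᵀ = toepT α := by
  induction α with
  | zero => exact transpose_one
  | succ n ih =>
    rw [toepT_succ, transpose_submatrix, ← kroneckerMap_transpose, toepOne_transpose, ih]

lemma toepT_mul_self (α : ℕ) : toepT α * toepT α = (4 : ℝ) ^ α • 1 := by
  induction α with
  | zero => simp [toepT]
  | succ n ih =>
    rw [toepT_succ, submatrix_mul_equiv, kronecker_mul_self_of_mul_self toepOne_mul_self ih,
      ← pow_succ', ← submatrix_one_equiv (Fin.consEquiv fun _ => Fin 4).symm]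
    rfl

theorem statement13_general (α : ℕ) :
    toepT α * toepT α = ((4 : ℝ) ^ α) • 1 ∧
    (toepT α)ᵀ = toepT α ∧
    (((2 : ℝ) ^ α)⁻¹ • toepT α) * (((2 : ℝ) ^ α)⁻¹ • toepT α)ᵀ = 1 := by
  refine ⟨toepT_mul_self α, toepT_transpose α, ?_⟩
  have four_pow : (4 : ℝ) ^ α = 2 ^ α * 2 ^ α := by rw [← mul_pow]; norm_num
  rw [transpose_smul, toepT_transpose, smul_mul_smul_comm, toepT_mul_self, smul_smul, four_pow,
    ← mul_mul_mul_comm, inv_mul_cancel₀ (by positivity), one_mul, one_smul]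

/-- `C_α² = 4^α · I` for every `α ≥ 1`; in particular `2^{-α} C_α` is a real
symmetric orthogonal matrix. -/
theorem statement13 (α : ℕ) (hα : 1 ≤ α) :
    toepT α * toepT α = ((4 : ℝ) ^ α) • 1 ∧
    (toepT α)ᵀ = toepT α ∧
    (((2 : ℝ) ^ α)⁻¹ • toepT α) * (((2 : ℝ) ^ α)⁻¹ • toepT α)ᵀ = 1 :=
  statement13_general α
end

section
/- Let C_α be the Toeplitz matrices defined recursively by C₁ = (4×4 matrix with −1 on diagonal, 1 off diagonal) and C_{α+1} = 4×4 block matrix with −C_α on the block diagonal and C_α off it. Then the quadratic form C_α(z) = Σ_{m,n=1}^{4^α} (C_α)_{mn} z_m z_n satisfies |C_α(z)| ≤ 8^α for all z in the closed unit polydisc D^{4^α}. -/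
open Filter Topology

/-!
Writing `(toepT α) m n = ∏ₖ ε(mₖ, nₖ)` with `ε(a, b) = -1` if `a = b` and `1` otherwise exhibits
`C_α` as the `α`-th Kronecker power of `C₁`. Since `C₁ᵀ C₁ = 4 I`, also `C_αᵀ C_α = 4^α I`, so
`z ↦ C_α z` multiplies the Euclidean norm by `2^α`. By Cauchy–Schwarz,
`|zᵀ C_α z| ≤ ‖z‖₂ · 2^α ‖z‖₂ ≤ 2^α · 4^α` on the polydisc, where `‖z‖₂² ≤ 4^α`.
-/

namespace Matrix

lemma conjTranspose_map_ofReal_mul_self {ι κ : Type*} [Fintype κ] [DecidableEq ι]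
    {A : Matrix κ ι ℝ} {c : ℝ} (hA : Aᵀ * A = c • (1 : Matrix ι ι ℝ)) :
    (A.map (↑) : Matrix κ ι ℂ)ᴴ * A.map (↑) = (c : ℂ) • (1 : Matrix ι ι ℂ) := by
  rw [← conjTranspose_map _ (fun r => (Complex.conj_ofReal r).symm),
    conjTranspose_eq_transpose_of_trivial]
  calc _ = (Aᵀ * A).map Complex.ofRealHom := Matrix.map_mul.symm
    _ = _ := by
      rw [hA]
      ext i j
      by_cases h : i = j <;> simp [h]

variable {𝕜 ι κ : Type*} [RCLike 𝕜] [Fintype ι] [Fintype κ]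

lemma norm_dotProduct_le (x y : ι → 𝕜) :
    ‖x ⬝ᵥ y‖ ≤ √(∑ i, ‖x i‖ ^ 2) * √(∑ i, ‖y i‖ ^ 2) :=
  calc ‖x ⬝ᵥ y‖ ≤ ∑ i, ‖x i * y i‖ := norm_sum_le _ _
    _ = ∑ i, ‖x i‖ * ‖y i‖ := by simp only [norm_mul]
    _ ≤ _ := Real.sum_mul_le_sqrt_mul_sqrt _ _ _

lemma ofReal_sum_norm_sq (v : ι → 𝕜) : ((∑ i, ‖v i‖ ^ 2 : ℝ) : 𝕜) = star v ⬝ᵥ v := by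
  simp [dotProduct, RCLike.conj_mul]

lemma sum_norm_mulVec_sq_of_conjTranspose_mul_self [DecidableEq ι] {A : Matrix κ ι 𝕜} {c : ℝ}
    (hA : Aᴴ * A = (c : 𝕜) • 1) (v : ι → 𝕜) :
    ∑ i, ‖(A *ᵥ v) i‖ ^ 2 = c * ∑ i, ‖v i‖ ^ 2 := by
  apply RCLike.ofReal_injective (K := 𝕜)
  rw [RCLike.ofReal_mul, ofReal_sum_norm_sq, ofReal_sum_norm_sq, star_mulVec, ← dotProduct_mulVec,
    mulVec_mulVec, hA, smul_mulVec, one_mulVec, dotProduct_smul, smul_eq_mul]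

lemma norm_dotProduct_mulVec_le_of_conjTranspose_mul_self [DecidableEq ι] {A : Matrix ι ι 𝕜}
    {c : ℝ} (hA : Aᴴ * A = (c : 𝕜) • 1) (hc : 0 ≤ c) {z : ι → 𝕜} (hz : ∀ i, ‖z i‖ ≤ 1) :
    ‖z ⬝ᵥ (A *ᵥ z)‖ ≤ √c * Fintype.card ι := by
  have hnorm : ∑ i, ‖z i‖ ^ 2 ≤ Fintype.card ι := by
    calc ∑ i, ‖z i‖ ^ 2 ≤ ∑ _i : ι, (1 : ℝ) :=
          Finset.sum_le_sum fun i _ => pow_le_one₀ (norm_nonneg _) (hz i)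
      _ = Fintype.card ι := by simp
  calc ‖z ⬝ᵥ (A *ᵥ z)‖ ≤ √(∑ i, ‖z i‖ ^ 2) * √(c * ∑ i, ‖z i‖ ^ 2) := by
        rw [← sum_norm_mulVec_sq_of_conjTranspose_mul_self hA]
        exact norm_dotProduct_le _ _
    _ = √c * ∑ i, ‖z i‖ ^ 2 := by
        rw [Real.sqrt_mul hc, mul_left_comm, Real.mul_self_sqrt (by positivity)]
    _ ≤ √c * Fintype.card ι := by gcongr

end Matrix

open Matrix

lemma toepT_apply (α : ℕ) (i j : Fin α → Fin 4) :
    toepT α i j = ∏ k, (if i k = j k then (-1 : ℝ) else 1) := by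
  induction α with
  | zero => simp [toepT, Subsingleton.elim i j]; rfl
  | succ α ih => simp only [toepT, ih, Fin.prod_univ_succ]

lemma sum_sign_mul_sign (a b : Fin 4) :
    ∑ t : Fin 4, (if t = a then (-1 : ℝ) else 1) * (if t = b then (-1 : ℝ) else 1)
      = if a = b then 4 else 0 := by
  fin_cases a <;> fin_cases b <;> simp [Fin.sum_univ_four] <;> norm_num

lemma toepT_transpose_mul_self (α : ℕ) : (toepT α)ᵀ * toepT α = (4 : ℝ) ^ α • 1 := by
  ext n n'
  simp only [mul_apply, transpose_apply, toepT_apply, ← Finset.prod_mul_distrib]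
  rw [← Fintype.prod_sum fun k t =>
    (if t = n k then (-1 : ℝ) else 1) * (if t = n' k then (-1 : ℝ) else 1)]
  simp only [sum_sign_mul_sign]
  simp only [Matrix.smul_apply, one_apply, smul_eq_mul, mul_ite, mul_one, mul_zero]
  split_ifs with h
  · simp [h]
  · obtain ⟨k, hk⟩ := Function.ne_iff.mp h
    exact Finset.prod_eq_zero (Finset.mem_univ k) (if_neg hk)

theorem statement14_general (α : ℕ) (z : (Fin α → Fin 4) → ℂ)
    (hz : ∀ i, ‖z i‖ ≤ 1) :
    ‖∑ m, ∑ n, (toepT α m n : ℂ) * z m * z n‖ ≤ 8 ^ α := by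
  have hQ : ∑ m, ∑ n, (toepT α m n : ℂ) * z m * z n = z ⬝ᵥ ((toepT α).map (↑) *ᵥ z) := by
    simp only [dotProduct, mulVec, Finset.mul_sum, map_apply]
    exact Finset.sum_congr rfl fun m _ => Finset.sum_congr rfl fun n _ => by ring
  calc _ = ‖z ⬝ᵥ ((toepT α).map (↑) *ᵥ z)‖ := by rw [hQ]
    _ ≤ √((4 : ℝ) ^ α) * Fintype.card (Fin α → Fin 4) :=
        norm_dotProduct_mulVec_le_of_conjTranspose_mul_self
          (conjTranspose_map_ofReal_mul_self (toepT_transpose_mul_self α))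
          (by positivity : (0 : ℝ) ≤ 4 ^ α) hz
    _ = 8 ^ α := by
        rw [Fintype.card_fun, Fintype.card_fin, Fintype.card_fin,
          show (4 : ℝ) ^ α = (2 ^ α) ^ 2 by rw [← pow_mul, mul_comm, pow_mul]; norm_num,
          Real.sqrt_sq (by positivity)]
        push_cast
        rw [← mul_pow]
        norm_num

/-- The quadratic form of the Toeplitz matrix `C_α` satisfies
`|C_α(z)| ≤ 8^α` for all `z` in the closed unit polydisc `D^{4^α}`. -/
theorem statement14 (α : ℕ) (hα : 1 ≤ α) (z : (Fin α → Fin 4) → ℂ)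
    (hz : ∀ i, ‖z i‖ ≤ 1) :
    ‖∑ m, ∑ n, (toepT α m n : ℂ) * z m * z n‖ ≤ 8 ^ α :=
  statement14_general α z hz
end
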